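/- arXiv:1308.0395 — 5 statements merged into one kernel-verified Lean document; each statement's English description precedes it below -/
import Mathlib

section
/- Let n ≥ 2 and let k be an integer with 1 ≤ k ≤ n/2. Let A and B be symmetric n×n matrices over ℂ such that A_{ij} = 0 and B_{ij} = 0 for all indices with i ≤ k and j ≤ n−k. Then the binary form det(Ax − By) ∈ ℂ[x,y] has discriminant zero; equivalently, there exists (x₀,y₀) ∈ ℂ² with (x₀,y₀) ≠ (0,0) such that the square of the linear form (y₀x − x₀y) divides the homogeneous polynomial det(Ax − By) in ℂ[x,y]. -/
/-!
Split the indices as `k + (n - 2k) + k`. The pencil `M = Ax - By` is symmetric and vanishes on the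
top-left `k × (n - k)` block, hence also on the top-left `(n - k) × k` block; swapping the two
outer blocks of columns makes it block lower triangular with diagonal blocks `P`, `Q`, `Pᵀ`, where
`P` is the top-right `k × k` corner. So `det P ^ 2 ∣ det M`, and `det P` is a binary form of
degree `k ≥ 1`, which over `ℂ` has a linear factor: dehomogenize, take a root, rehomogenize.
-/

open MvPolynomial Matrix

noncomputable section

/-- The bivariate polynomial `det (A x - B y)`. -/
def pairDet {R : Type*} [CommRing R] {n : ℕ} (A B : Matrix (Fin n) (Fin n) R) :
    MvPolynomial (Fin 2) R :=
  (Matrix.of fun i j => (C (A i j) * X 0 - C (B i j) * X 1 : MvPolynomial (Fin 2) R)).det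

theorem exists_linearForm_dvd_homogenize {K : Type*} [Field K] [IsAlgClosed K]
    {f : Polynomial K} {d : ℕ} (hd : d ≠ 0) (hf : f.natDegree ≤ d) :
    ∃ x₀ y₀ : K, (x₀, y₀) ≠ (0, 0) ∧
      (C y₀ * X 0 - C x₀ * X 1 : MvPolynomial (Fin 2) K) ∣ f.homogenize d := by
  obtain ⟨d, rfl⟩ : ∃ e, d = e + 1 := ⟨d - 1, by omega⟩
  rcases hf.lt_or_eq with hlt | heq
  · refine ⟨-1, 0, by simp, ?_⟩
    rw [← mul_one f, f.homogenize_mul 1 (Nat.lt_succ_iff.mp hlt) (by simp)]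
    simp
  · obtain ⟨t, ht⟩ :=
      IsAlgClosed.exists_root f (Polynomial.natDegree_pos_iff_degree_pos.mp (by omega)).ne'
    have hquot : (f /ₘ (Polynomial.X - Polynomial.C t)).natDegree ≤ d := by
      rw [Polynomial.natDegree_divByMonic _ (Polynomial.monic_X_sub_C t), heq,
        Polynomial.natDegree_X_sub_C, Nat.add_sub_cancel]
    refine ⟨t, 1, by simp, ?_⟩
    rw [← Polynomial.mul_divByMonic_eq_iff_isRoot.mpr ht, add_comm,
      Polynomial.homogenize_mul _ _ (Polynomial.natDegree_X_sub_C_le t) hquot]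
    simp [Polynomial.homogenize_X]

theorem MvPolynomial.IsHomogeneous.exists_linearForm_dvd {K : Type*} [Field K] [IsAlgClosed K]
    {p : MvPolynomial (Fin 2) K} {d : ℕ} (hp : p.IsHomogeneous d) (hd : d ≠ 0) :
    ∃ x₀ y₀ : K, (x₀, y₀) ≠ (0, 0) ∧
      (C y₀ * X 0 - C x₀ * X 1 : MvPolynomial (Fin 2) K) ∣ p := by
  have hdeg : (MvPolynomial.aeval ![Polynomial.X, 1] p : Polynomial K).natDegree ≤ d := by
    simpa using aeval_natDegree_le p hp.totalDegree_le _ (n := 1) fun i => by fin_cases i <;> simp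
  rw [← Polynomial.homogenize_eq_of_isHomogeneous hp rfl]
  exact exists_linearForm_dvd_homogenize hd hdeg

theorem MvPolynomial.IsHomogeneous.det {ι σ R : Type*} [Fintype ι] [DecidableEq ι] [CommRing R]
    {M : Matrix ι ι (MvPolynomial σ R)} (hM : ∀ i j, (M i j).IsHomogeneous 1) :
    M.det.IsHomogeneous (Fintype.card ι) := by
  rw [det_apply]
  refine IsHomogeneous.sum _ _ _ fun τ _ => ?_
  have hprod := IsHomogeneous.prod _ _ (fun _ => 1) fun i (_ : i ∈ Finset.univ) => hM (τ i) i
  rw [Finset.sum_const, smul_eq_mul, mul_one, Finset.card_univ, ← mem_homogeneousSubmodule]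
    at hprod
  rw [← mem_homogeneousSubmodule]
  exact Submodule.smul_of_tower_mem _ _ hprod

section Pencil

variable {R ι : Type*} [CommRing R]

def Matrix.pencil (A B : Matrix ι ι R) : Matrix ι ι (MvPolynomial (Fin 2) R) :=
  of fun i j => C (A i j) * X 0 - C (B i j) * X 1

theorem Matrix.IsSymm.pencil {A B : Matrix ι ι R} (hA : A.IsSymm) (hB : B.IsSymm) :
    (A.pencil B).IsSymm := by
  ext i j
  simp [Matrix.pencil, hA.apply, hB.apply]

theorem Matrix.isHomogeneous_det_pencil [Fintype ι] [DecidableEq ι] (A B : Matrix ι ι R) :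
    (A.pencil B).det.IsHomogeneous (Fintype.card ι) :=
  IsHomogeneous.det fun _ _ => (isHomogeneous_C_mul_X _ _).sub (isHomogeneous_C_mul_X _ _)

theorem pairDet_eq_det_pencil {n : ℕ} (A B : Matrix (Fin n) (Fin n) R) :
    pairDet A B = (A.pencil B).det := rfl

end Pencil

section CornerBlocks

variable {R α β : Type*}

def Sum.swapOuter : (α ⊕ β) ⊕ α → (α ⊕ β) ⊕ α
  | .inl (.inl a) => .inr a
  | .inl (.inr b) => .inl (.inr b)
  | .inr a => .inl (.inl a)

theorem Sum.swapOuter_involutive :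
    Function.Involutive (Sum.swapOuter : (α ⊕ β) ⊕ α → (α ⊕ β) ⊕ α) := by
  rintro ((a | b) | a) <;> rfl

variable [CommRing R] [Fintype α] [Fintype β] [DecidableEq α] [DecidableEq β]

theorem Matrix.det_mul_det_dvd_det_of_corner_eq_zero
    (M : Matrix ((α ⊕ β) ⊕ α) ((α ⊕ β) ⊕ α) R) (h₁ : ∀ a x, M (.inl (.inl a)) (.inl x) = 0)
    (h₂ : ∀ x a, M (.inl x) (.inl (.inl a)) = 0) :
    (of fun a b => M (.inl (.inl a)) (.inr b)).det *
      (of fun a b => M (.inr a) (.inl (.inl b))).det ∣ M.det := by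
  set σ := Sum.swapOuter_involutive.toPerm (α := (α ⊕ β) ⊕ α)
  have hblocks : M.submatrix id σ =
      fromBlocks
        (fromBlocks (of fun a b => M (.inl (.inl a)) (.inr b)) 0
          (of fun b a => M (.inl (.inr b)) (.inr a))
          (of fun b b' => M (.inl (.inr b)) (.inl (.inr b'))))
        0 (of fun a x => M (.inr a) (σ (.inl x))) (of fun a b => M (.inr a) (.inl (.inl b))) := by
    ext ((a | b) | a) ((c | d) | c) <;> simp [σ, Sum.swapOuter, h₁, h₂]
  have hdet := det_permute' σ M
  rw [hblocks, det_fromBlocks_zero₁₂, det_fromBlocks_zero₁₂] at hdet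
  rw [← ((Equiv.Perm.sign σ).isUnit.map (Int.castRingHom R)).dvd_mul_left]
  exact ⟨_, hdet.symm.trans (mul_right_comm _ _ _)⟩

theorem Matrix.det_sq_dvd_det_of_isSymm {M : Matrix ((α ⊕ β) ⊕ α) ((α ⊕ β) ⊕ α) R}
    (hM : M.IsSymm) (h : ∀ a x, M (.inl (.inl a)) (.inl x) = 0) :
    (of fun a b => M (.inl (.inl a)) (.inr b)).det ^ 2 ∣ M.det := by
  have hcorner : (of fun a b => M (.inr a) (.inl (.inl b))) =
      (of fun a b => M (.inl (.inl a)) (.inr b))ᵀ := by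
    ext a b
    exact hM.apply _ _
  simpa [sq, hcorner] using
    det_mul_det_dvd_det_of_corner_eq_zero M h fun x a => (hM.apply _ _).trans (h a x)

end CornerBlocks

theorem det_discriminant_zero_of_block_vanishing_general (n k : ℕ)
    (hk1 : 1 ≤ k) (hk2 : 2 * k ≤ n)
    (A B : Matrix (Fin n) (Fin n) ℂ) (hA : A.IsSymm) (hB : B.IsSymm)
    (hzero : ∀ i j : Fin n, (i : ℕ) < k → (j : ℕ) < n - k → A i j = 0 ∧ B i j = 0) :
    ∃ x₀ y₀ : ℂ, (x₀, y₀) ≠ (0, 0) ∧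
      (C y₀ * X 0 - C x₀ * X 1 : MvPolynomial (Fin 2) ℂ) ^ 2 ∣ pairDet A B := by
  obtain ⟨l, rfl⟩ : ∃ l, n = k + l + k := ⟨n - 2 * k, by omega⟩
  let e : (Fin k ⊕ Fin l) ⊕ Fin k ≃ Fin (k + l + k) :=
    (Equiv.sumCongr finSumFinEquiv (Equiv.refl _)).trans finSumFinEquiv
  let M := (A.pencil B).submatrix e e
  have hcorner : ∀ a x, M (.inl (.inl a)) (.inl x) = 0 := by
    intro a x
    obtain ⟨hA0, hB0⟩ := hzero (e (.inl (.inl a))) (e (.inl x)) (by simp [e])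
      (by rcases x with x | x <;> simp [e]; omega)
    simp [M, Matrix.pencil, hA0, hB0]
  have hsq := det_sq_dvd_det_of_isSymm ((hA.pencil hB).submatrix e) hcorner
  obtain ⟨x₀, y₀, hne, hlin⟩ :=
    ((A.submatrix (e ∘ .inl ∘ .inl) (e ∘ .inr)).isHomogeneous_det_pencil
      (B.submatrix (e ∘ .inl ∘ .inl) (e ∘ .inr))).exists_linearForm_dvd
      (by rw [Fintype.card_fin]; omega)
  rw [pairDet_eq_det_pencil, ← det_submatrix_equiv_self e]
  exact ⟨x₀, y₀, hne, (pow_dvd_pow_of_dvd hlin 2).trans hsq⟩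

/-- If the top left `k × (n-k)` blocks of the symmetric matrices `A` and `B` vanish
(for some `1 ≤ k ≤ n/2`), then the binary form `det(Ax - By)` has discriminant zero:
it is divisible by the square of a nonzero linear form. -/
theorem det_discriminant_zero_of_block_vanishing (n k : ℕ) (hn : 2 ≤ n)
    (hk1 : 1 ≤ k) (hk2 : 2 * k ≤ n)
    (A B : Matrix (Fin n) (Fin n) ℂ) (hA : A.IsSymm) (hB : B.IsSymm)
    (hzero : ∀ i j : Fin n, (i : ℕ) < k → (j : ℕ) < n - k → A i j = 0 ∧ B i j = 0) :
    ∃ x₀ y₀ : ℂ, (x₀, y₀) ≠ (0, 0) ∧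
      (C y₀ * X 0 - C x₀ * X 1 : MvPolynomial (Fin 2) ℂ) ^ 2 ∣ pairDet A B :=
  det_discriminant_zero_of_block_vanishing_general n k hk1 hk2 A B hA hB hzero
end
end

section
/- Let n ≥ 2 be even, and let f(x,y) = f₀xⁿ + f₁xⁿ⁻¹y + ⋯ + fₙyⁿ be a binary n-ic form with real coefficients that is negative definite, i.e., f(x,y) < 0 for all (x,y) ∈ ℝ² with (x,y) ≠ (0,0), and such that the degree-n polynomial f(x,1) is squarefree. Then there exists no pair (A,B) of real symmetric n×n matrices with (−1)^{n/2} det(Ax − By) = f(x,y) for all x, y ∈ ℝ. -/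
/-!
Rotating the pencil, `γ t = cos t • A - sin t • B` is a path of symmetric matrices from `A` to
`-A` with `det (γ t) = ± f (cos t, sin t) ≠ 0`. The signature of a nondegenerate quadratic form
cannot jump along such a path, because positive definiteness on a fixed subspace is an open
condition. Hence `A` and `-A` have the same number of positive eigenvalues, so `A` has exactly
`n/2` negative ones and `det A` has the sign of `(-1)^(n/2)`; but `(-1)^(n/2) det A = f(1,0) < 0`.
-/

open Matrix QuadraticMap QuadraticForm Filter Topology

lemma neg_one_pow_ncard_mul_prod_pos {ι R : Type*} [Fintype ι] [CommRing R] [LinearOrder R]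
    [IsStrictOrderedRing R] {w : ι → R} (hw : ∀ i, w i ≠ 0) :
    0 < (-1) ^ {i | w i < 0}.ncard * ∏ i, w i := by
  classical
  calc (0 : R) < ∏ i, |w i| := Finset.prod_pos fun i _ => abs_pos.2 (hw i)
    _ = ∏ i, (if w i < 0 then -1 else 1) * w i := by
      refine Finset.prod_congr rfl fun i _ => ?_
      split_ifs with h
      · rw [abs_of_neg h, neg_one_mul]
      · rw [abs_of_nonneg (not_lt.1 h), one_mul]
    _ = (-1) ^ {i | w i < 0}.ncard * ∏ i, w i := by
      rw [Finset.prod_mul_distrib, Finset.prod_ite, Finset.prod_const, Finset.prod_const, one_pow,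
        mul_one, Set.ncard_eq_toFinset_card']
      simp

namespace Matrix

variable {ι : Type*} [Fintype ι] [DecidableEq ι]

section CommRing

variable {R : Type*} [CommRing R]

lemma toQuadraticForm'_apply (M : Matrix ι ι R) (v : ι → R) :
    M.toQuadraticForm' v = v ⬝ᵥ M *ᵥ v := by
  simp [toQuadraticForm', toLinearMap₂'_apply']

lemma toQuadraticForm'_neg (M : Matrix ι ι R) :
    (-M).toQuadraticForm' = -M.toQuadraticForm' := by
  ext v
  simp [toQuadraticForm'_apply, neg_mulVec]

lemma toQuadraticForm'_diagonal (w : ι → R) :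
    (diagonal w).toQuadraticForm' = weightedSumSquares R w := by
  ext v
  simp [toQuadraticForm'_apply, weightedSumSquares_apply, dotProduct, mulVec_diagonal,
    mul_left_comm]

lemma equivalent_toQuadraticForm'_mul_mul_star [StarRing R] [TrivialStar R]
    (U : unitaryGroup ι R) (D : Matrix ι ι R) :
    Equivalent (U * D * star U : Matrix ι ι R).toQuadraticForm' D.toQuadraticForm' := by
  have hU : ((star U : unitaryGroup ι R) : Matrix ι ι R) = (U : Matrix ι ι R)ᵀ := by
    rw [Unitary.coe_star, star_eq_conjTranspose, conjTranspose_eq_transpose_of_trivial]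
  refine ⟨⟨UnitaryGroup.toLinearEquiv (star U), fun v => ?_⟩⟩
  change D.toQuadraticForm' ((star U : unitaryGroup ι R) *ᵥ v) = _
  rw [toQuadraticForm'_apply, toQuadraticForm'_apply, ← mulVec_mulVec, ← mulVec_mulVec,
    dotProduct_mulVec v, hU, mulVec_transpose]

end CommRing

namespace IsHermitian

variable {A : Matrix ι ι ℝ} (hA : A.IsHermitian)
include hA

lemma equivalent_weightedSumSquares_eigenvalues :
    Equivalent A.toQuadraticForm' (weightedSumSquares ℝ hA.eigenvalues) := by
  have hdiag : A = hA.eigenvectorUnitary * diagonal hA.eigenvalues *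
      star (hA.eigenvectorUnitary : Matrix ι ι ℝ) := by
    simpa using hA.spectral_theorem
  rw [← toQuadraticForm'_diagonal]
  nth_rw 1 [hdiag]
  exact equivalent_toQuadraticForm'_mul_mul_star _ _

lemma eigenvalues_ne_zero_of_det_ne_zero (hdet : A.det ≠ 0) (i : ι) : hA.eigenvalues i ≠ 0 := by
  rw [hA.det_eq_prod_eigenvalues] at hdet
  exact fun h => hdet (Finset.prod_eq_zero (Finset.mem_univ i) (by simp [h]))

lemma sigPos_add_sigNeg (hdet : A.det ≠ 0) :
    sigPos A.toQuadraticForm' + sigNeg A.toQuadraticForm' = Fintype.card ι := by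
  have h := sigPos_add_sigNeg_add_radical (Q := A.toQuadraticForm')
  have hzero : {i | hA.eigenvalues i = 0} = ∅ :=
    Set.eq_empty_of_forall_notMem (hA.eigenvalues_ne_zero_of_det_ne_zero hdet)
  rwa [finrank_radical_of_equiv_weightedSumSquares hA.equivalent_weightedSumSquares_eigenvalues,
    hzero, Set.ncard_empty, add_zero, Module.finrank_fintype_fun_eq_card] at h

lemma neg_one_pow_sigNeg_mul_det_pos (hdet : A.det ≠ 0) :
    0 < (-1) ^ sigNeg A.toQuadraticForm' * A.det := by
  rw [sigNeg_of_equiv_weightedSumSquares hA.equivalent_weightedSumSquares_eigenvalues,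
    hA.det_eq_prod_eigenvalues]
  exact neg_one_pow_ncard_mul_prod_pos (hA.eigenvalues_ne_zero_of_det_ne_zero hdet)

end IsHermitian

lemma continuous_toQuadraticForm'_apply :
    Continuous fun p : Matrix ι ι ℝ × (ι → ℝ) => p.1.toQuadraticForm' p.2 := by
  simp only [toQuadraticForm'_apply]
  exact continuous_snd.dotProduct (continuous_fst.matrix_mulVec continuous_snd)

lemma isOpen_setOf_posDef_restrict (V : Submodule ℝ (ι → ℝ)) :
    IsOpen {M : Matrix ι ι ℝ | (M.toQuadraticForm'.restrict V).PosDef} := by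
  refine isOpen_iff_eventually.2 fun M₀ hM₀ => ?_
  have hK : IsCompact ((V : Set (ι → ℝ)) ∩ Metric.sphere 0 1) :=
    (isCompact_sphere 0 1).inter_left V.closed_of_finiteDimensional
  have hunit : ∀ᶠ M in 𝓝 M₀, ∀ u ∈ (V : Set (ι → ℝ)) ∩ Metric.sphere 0 1,
      0 < M.toQuadraticForm' u := by
    refine hK.eventually_forall_of_forall_eventually fun u ⟨huV, hu⟩ => ?_
    refine (isOpen_lt continuous_const continuous_toQuadraticForm'_apply).mem_nhds ?_
    exact hM₀ ⟨u, huV⟩ (by rintro ⟨⟩; simp at hu)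
  filter_upwards [hunit] with M hM
  rintro ⟨v, hv⟩ hv0
  have hnorm : ‖v‖ ≠ 0 := norm_ne_zero_iff.2 fun h => hv0 (by simp [h])
  have hscaled := hM (‖v‖⁻¹ • v) ⟨V.smul_mem _ hv, by simp [norm_smul, hnorm]⟩
  rw [QuadraticMap.map_smul, smul_eq_mul] at hscaled
  rw [restrict_apply]
  exact pos_of_mul_pos_right hscaled (by positivity)

lemma eventually_sigPos_le (M₀ : Matrix ι ι ℝ) :
    ∀ᶠ M in 𝓝 M₀, sigPos M₀.toQuadraticForm' ≤ sigPos M.toQuadraticForm' := by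
  obtain ⟨V, hV, hpos⟩ := exists_finrank_eq_sigPos_and_posDef M₀.toQuadraticForm'
  filter_upwards [(isOpen_setOf_posDef_restrict V).mem_nhds hpos] with M hM
  exact hV ▸ le_sigPos_of_posDef _ hM

lemma eventually_sigNeg_le (M₀ : Matrix ι ι ℝ) :
    ∀ᶠ M in 𝓝 M₀, sigNeg M₀.toQuadraticForm' ≤ sigNeg M.toQuadraticForm' := by
  simpa only [← sigPos_neg, ← toQuadraticForm'_neg, neg_neg] using
    continuous_neg.continuousAt.eventually (eventually_sigPos_le (-M₀))

lemma isLocallyConstant_sigPos {X : Type*} [TopologicalSpace X] {γ : X → Matrix ι ι ℝ}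
    (hγ : Continuous γ) (hherm : ∀ x, (γ x).IsHermitian) (hdet : ∀ x, (γ x).det ≠ 0) :
    IsLocallyConstant fun x => sigPos (γ x).toQuadraticForm' := by
  refine (IsLocallyConstant.iff_eventually_eq _).2 fun x₀ => ?_
  filter_upwards [hγ.continuousAt.eventually (eventually_sigPos_le (γ x₀)),
    hγ.continuousAt.eventually (eventually_sigNeg_le (γ x₀))] with x hpos hneg
  have hx := (hherm x).sigPos_add_sigNeg (hdet x)
  have hx₀ := (hherm x₀).sigPos_add_sigNeg (hdet x₀)
  omega

lemma neg_one_pow_half_card_mul_det_pos_of_joined_neg {X : Type*} [TopologicalSpace X]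
    [PreconnectedSpace X] {γ : X → Matrix ι ι ℝ} (hγ : Continuous γ)
    (hherm : ∀ x, (γ x).IsHermitian) (hdet : ∀ x, (γ x).det ≠ 0) {x₀ x₁ : X}
    (hx₁ : γ x₁ = -γ x₀) :
    0 < (-1) ^ (Fintype.card ι / 2) * (γ x₀).det := by
  have hsig : sigPos (γ x₀).toQuadraticForm' = sigNeg (γ x₀).toQuadraticForm' := by
    rw [← sigPos_neg, ← toQuadraticForm'_neg, ← hx₁]
    exact (isLocallyConstant_sigPos hγ hherm hdet).apply_eq_of_preconnectedSpace x₀ x₁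
  have hsum := (hherm x₀).sigPos_add_sigNeg (hdet x₀)
  rw [show Fintype.card ι / 2 = sigNeg (γ x₀).toQuadraticForm' by omega]
  exact (hherm x₀).neg_one_pow_sigNeg_mul_det_pos (hdet x₀)

end Matrix

theorem no_real_orbits_for_negative_definite_general (n : ℕ)
    (f : Fin (n + 1) → ℝ)
    (hneg : ∀ x y : ℝ, (x, y) ≠ (0, 0) →
      (∑ i : Fin (n + 1), f i * x ^ (n - (i : ℕ)) * y ^ (i : ℕ)) < 0) :
    ¬ ∃ A B : Matrix (Fin n) (Fin n) ℝ, A.IsSymm ∧ B.IsSymm ∧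
      ∀ x y : ℝ, (-1 : ℝ) ^ (n / 2) * (x • A - y • B).det =
        ∑ i : Fin (n + 1), f i * x ^ (n - (i : ℕ)) * y ^ (i : ℕ) := by
  rintro ⟨A, B, hA, hB, hf⟩
  have hdet : ∀ x y : ℝ, (x, y) ≠ (0, 0) → (x • A - y • B).det ≠ 0 := fun x y hxy h0 => by
    have h := hneg x y hxy
    rw [← hf, h0, mul_zero] at h
    exact lt_irrefl 0 h
  let γ : ℝ → Matrix (Fin n) (Fin n) ℝ := fun t => Real.cos t • A - Real.sin t • B
  have hγ_herm : ∀ t, (γ t).IsHermitian := fun t => by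
    simpa [isHermitian_iff_isSymm] using (hA.smul (Real.cos t)).sub (hB.smul (Real.sin t))
  have hγ_det : ∀ t, (γ t).det ≠ 0 := fun t => hdet _ _ fun h => by
    have := Real.sin_sq_add_cos_sq t
    simp_all [Prod.ext_iff]
  have hA_pos : 0 < (-1 : ℝ) ^ (n / 2) * A.det := by
    simpa [γ] using neg_one_pow_half_card_mul_det_pos_of_joined_neg (by fun_prop) hγ_herm hγ_det
      (x₀ := 0) (x₁ := Real.pi) (by simp [γ])
  have hA_neg : (-1 : ℝ) ^ (n / 2) * A.det < 0 := by
    have h := hneg 1 0 (by simp)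
    rwa [← hf, one_smul, zero_smul, sub_zero] at h
  exact hA_pos.not_gt hA_neg

/-- If `f` is a negative definite real binary `n`-ic form (with `n` even) whose
dehomogenization `f(x,1)` is squarefree, then `f` is not the invariant form
`(-1)^{n/2} det(Ax - By)` of any pair of real symmetric matrices. -/
theorem no_real_orbits_for_negative_definite (n : ℕ) (hn : 2 ≤ n) (he : Even n)
    (f : Fin (n + 1) → ℝ)
    (hneg : ∀ x y : ℝ, (x, y) ≠ (0, 0) →
      (∑ i : Fin (n + 1), f i * x ^ (n - (i : ℕ)) * y ^ (i : ℕ)) < 0)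
    (hsf : Squarefree (∑ i : Fin (n + 1), Polynomial.C (f i) * Polynomial.X ^ (n - (i : ℕ)))) :
    ¬ ∃ A B : Matrix (Fin n) (Fin n) ℝ, A.IsSymm ∧ B.IsSymm ∧
      ∀ x y : ℝ, (-1 : ℝ) ^ (n / 2) * (x • A - y • B).det =
        ∑ i : Fin (n + 1), f i * x ^ (n - (i : ℕ)) * y ^ (i : ℕ) :=
  no_real_orbits_for_negative_definite_general n f hneg
end

section
/- Let R be a commutative ring, let f₀, f₁, f₂, f₃, f₄, c ∈ R with c² = f₄, and set A = [[−1,0,0,0],[0,0,0,1],[0,0,f₀,f₁],[0,1,f₁,f₂]] and B = [[0,0,0,c],[0,0,1,0],[0,1,f₁,0],[c,0,0,−f₃]] (both symmetric 4×4 matrices over R). Then det(Ax − By) = f₀x⁴ + f₁x³y + f₂x²y² + f₃xy³ + f₄y⁴ as an identity of polynomials in x and y over R. -/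
open MvPolynomial Matrix

noncomputable section

lemma detFour {S : Type*} [CommRing S] (A : Matrix (Fin 4) (Fin 4) S) :
    A.det =
      A 0 0 * (A 1 1*A 2 2*A 3 3 - A 1 1*A 2 3*A 3 2 - A 1 2*A 2 1*A 3 3 + A 1 2*A 2 3*A 3 1 + A 1 3*A 2 1*A 3 2 - A 1 3*A 2 2*A 3 1)
      - A 0 1 * (A 1 0*A 2 2*A 3 3 - A 1 0*A 2 3*A 3 2 - A 1 2*A 2 0*A 3 3 + A 1 2*A 2 3*A 3 0 + A 1 3*A 2 0*A 3 2 - A 1 3*A 2 2*A 3 0)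
      + A 0 2 * (A 1 0*A 2 1*A 3 3 - A 1 0*A 2 3*A 3 1 - A 1 1*A 2 0*A 3 3 + A 1 1*A 2 3*A 3 0 + A 1 3*A 2 0*A 3 1 - A 1 3*A 2 1*A 3 0)
      - A 0 3 * (A 1 0*A 2 1*A 3 2 - A 1 0*A 2 2*A 3 1 - A 1 1*A 2 0*A 3 2 + A 1 1*A 2 2*A 3 0 + A 1 2*A 2 0*A 3 1 - A 1 2*A 2 1*A 3 0) := by
  rw [Matrix.det_succ_row_zero, Fin.sum_univ_four]
  simp only [Matrix.det_fin_three, Matrix.submatrix_apply,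
    show ((0:Fin 4).succAbove 0 = 1) from rfl, show ((0:Fin 4).succAbove 1 = 2) from rfl,
    show ((0:Fin 4).succAbove 2 = 3) from rfl,
    show ((1:Fin 4).succAbove 0 = 0) from rfl, show ((1:Fin 4).succAbove 1 = 2) from rfl,
    show ((1:Fin 4).succAbove 2 = 3) from rfl,
    show ((2:Fin 4).succAbove 0 = 0) from rfl, show ((2:Fin 4).succAbove 1 = 1) from rfl,
    show ((2:Fin 4).succAbove 2 = 3) from rfl,
    show ((3:Fin 4).succAbove 0 = 0) from rfl, show ((3:Fin 4).succAbove 1 = 1) from rfl,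
    show ((3:Fin 4).succAbove 2 = 2) from rfl,
    show (Fin.succ 0 : Fin 4) = 1 from rfl, show (Fin.succ 1 : Fin 4) = 2 from rfl,
    show (Fin.succ 2 : Fin 4) = 3 from rfl,
    Fin.val_zero, Fin.val_one, Fin.val_two, show ((3:Fin 4):ℕ) = 3 from rfl]
  ring

set_option maxHeartbeats 2000000 in
/-- The `n = 4` case of the explicit construction: if `f₄ = c²`, the displayed pair
`(A,B)` of symmetric `4 × 4` matrices satisfies
`det(Ax − By) = f₀x⁴ + f₁x³y + f₂x²y² + f₃xy³ + f₄y⁴`. -/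
theorem explicit_pair_quartic {R : Type*} [CommRing R]
    (f₀ f₁ f₂ f₃ f₄ c : R) (hc : c ^ 2 = f₄) :
    pairDet
        (!![-1, 0, 0, 0;
            0, 0, 0, 1;
            0, 0, f₀, f₁;
            0, 1, f₁, f₂])
        (!![0, 0, 0, c;
            0, 0, 1, 0;
            0, 1, f₁, 0;
            c, 0, 0, -f₃]) =
      C f₀ * X 0 ^ 4 + C f₁ * X 0 ^ 3 * X 1 + C f₂ * X 0 ^ 2 * X 1 ^ 2 +
        C f₃ * X 0 * X 1 ^ 3 + C f₄ * X 1 ^ 4 := by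
  rw [pairDet, detFour]
  simp only [Matrix.of_apply, Matrix.cons_val', Matrix.cons_val_zero, Matrix.cons_val_one,
    Matrix.head_cons, Matrix.empty_val', Matrix.cons_val_fin_one, Matrix.head_fin_const,
    Matrix.cons_val_two, Matrix.tail_cons, Matrix.cons_val_three, map_zero, _root_.map_one, map_neg,
    ← hc, map_pow]
  ring
end
end

section
/- Let n ≥ 4 be even, and let f(x,y) = f₀xⁿ + f₁xⁿ⁻¹y + ⋯ + fₙyⁿ be an integral binary n-ic form with f₀ ≠ 0 and with fₙ = c² for some c ∈ ℤ. Let K = ℚ[x]/(f(x,1)), let θ be the image of x in K, and for 1 ≤ k ≤ n−1 set ζ_k = f₀θ^k + f₁θ^{k−1} + ⋯ + f_{k−1}θ ∈ K. Let I be the ℤ-submodule of K spanned by {c, θ, θ², …, θ^{(n−2)/2}, ζ_{n/2}, ζ_{n/2+1}, …, ζ_{n−1}}. Then the product of any two elements of I lies in the ℤ-submodule of K spanned by {c², θ, θ², …, θ^{n−2}, f₀θ^{n−1}}; i.e., I·I ⊆ span_ℤ{c², θ, θ², …, θ^{n−2}, f₀θ^{n−1}}. -/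
noncomputable section

/-- The dehomogenization `f(x,1) = f₀xⁿ + f₁xⁿ⁻¹ + ⋯ + fₙ` of an integral binary
`n`-ic form with coefficients `f 0, …, f n`, as a polynomial over `ℚ`. -/
def fPoly (n : ℕ) (f : ℕ → ℤ) : Polynomial ℚ :=
  ∑ i ∈ Finset.range (n + 1), Polynomial.C ((f i : ℚ)) * Polynomial.X ^ (n - i)

/-- The algebra `K = ℚ[x]/(f(x,1))`. -/
abbrev Kf (n : ℕ) (f : ℕ → ℤ) : Type _ := AdjoinRoot (fPoly n f)

/-- The image of an integer in `K`. -/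
def ι (n : ℕ) (f : ℕ → ℤ) (m : ℤ) : Kf n f := algebraMap ℚ (Kf n f) (m : ℚ)

/-- Wood's basis element `ζ_k = f₀θ^k + f₁θ^{k−1} + ⋯ + f_{k−1}θ`. -/
def zeta (n : ℕ) (f : ℕ → ℤ) (k : ℕ) : Kf n f :=
  ∑ j ∈ Finset.range k, ι n f (f j) * (AdjoinRoot.root (fPoly n f)) ^ (k - j)

/-- The generating set `{c, θ, θ², …, θ^{(n−2)/2}, ζ_{n/2}, …, ζ_{n−1}}` of `I`. -/
def Igens (n : ℕ) (f : ℕ → ℤ) (c : ℤ) : Set (Kf n f) :=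
  {x | x = ι n f c ∨
    (∃ i : ℕ, 1 ≤ i ∧ i ≤ (n - 2) / 2 ∧ x = (AdjoinRoot.root (fPoly n f)) ^ i) ∨
    (∃ k : ℕ, n / 2 ≤ k ∧ k ≤ n - 1 ∧ x = zeta n f k)}

/-- The generating set `{c², θ, θ², …, θ^{n−2}, f₀θ^{n−1}}` of `θ·I_f^{n−3}`. -/
def Tgens (n : ℕ) (f : ℕ → ℤ) (c : ℤ) : Set (Kf n f) :=
  {x | x = ι n f (c ^ 2) ∨
    (∃ i : ℕ, 1 ≤ i ∧ i ≤ n - 2 ∧ x = (AdjoinRoot.root (fPoly n f)) ^ i) ∨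
    x = ι n f (f 0) * (AdjoinRoot.root (fPoly n f)) ^ (n - 1)}

/-!
Write `ζ_l = ∑_{j<l} f_j θ^{l-j}`. For `m + l ≥ n` the relation `∑_{j ≤ n} f_j θ^{n-j} = 0`
turns `θ^m ζ_l` into `-∑_{l ≤ j ≤ n} f_j θ^{m+l-j}`, whose only constant term is `f_n = c²`.
Hence every product of two generators of `I` is a `ℤ`-combination of `c²`, of `θ^e` with
`1 ≤ e ≤ n - 2`, and of `f₀θ^{n-1}`.
-/

open Finset

section

variable {n : ℕ} {f : ℕ → ℤ} {c : ℤ}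

local notation "θ" => AdjoinRoot.root (fPoly n f)
local notation "T" => Submodule.span ℤ (Tgens n f c)

lemma ι_eq_intCast (m : ℤ) : ι n f m = (m : Kf n f) := by
  simp [ι]

lemma zeta_eq_sum (k : ℕ) :
    zeta n f k = ∑ j ∈ range k, (f j : Kf n f) * θ ^ (k - j) := by
  simp only [zeta, ι_eq_intCast]

lemma sum_coeff_mul_root_pow_eq_zero :
    ∑ j ∈ range (n + 1), (f j : Kf n f) * θ ^ (n - j) = 0 := by
  have h : Polynomial.aeval θ
      (∑ j ∈ range (n + 1), Polynomial.C (f j : ℚ) * Polynomial.X ^ (n - j)) = 0 :=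
    (AdjoinRoot.aeval_eq _).trans AdjoinRoot.mk_self
  simpa [map_sum] using h

lemma root_pow_mul_zeta (m l : ℕ) :
    θ ^ m * zeta n f l = ∑ j ∈ range l, (f j : Kf n f) * θ ^ (m + l - j) := by
  rw [zeta_eq_sum, mul_sum]
  refine sum_congr rfl fun j hj => ?_
  rw [show m + l - j = m + (l - j) by have := mem_range.1 hj; omega, pow_add]
  ring

lemma root_pow_mul_zeta_of_le {m l : ℕ} (hl : l ≤ n) (hlm : n ≤ m + l) :
    θ ^ m * zeta n f l = -∑ j ∈ Ico l (n + 1), (f j : Kf n f) * θ ^ (m + l - j) := by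
  have hrel : ∑ j ∈ range (n + 1), (f j : Kf n f) * θ ^ (m + l - j) = 0 := by
    rw [← mul_zero (θ ^ (m + l - n)), ← sum_coeff_mul_root_pow_eq_zero, mul_sum]
    refine sum_congr rfl fun j hj => ?_
    rw [show m + l - j = m + l - n + (n - j) by have := mem_range.1 hj; omega, pow_add]
    ring
  rw [root_pow_mul_zeta, eq_neg_iff_add_eq_zero,
    sum_range_add_sum_Ico _ (by omega : l ≤ n + 1), hrel]

lemma intCast_mul_mem (a : ℤ) {x : Kf n f} (hx : x ∈ T) : (a : Kf n f) * x ∈ T := by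
  simpa only [zsmul_eq_mul] using Submodule.smul_mem _ a hx

lemma root_pow_mem {e : ℕ} (h1 : 1 ≤ e) (h2 : e ≤ n - 2) : θ ^ e ∈ T :=
  Submodule.subset_span (Or.inr (Or.inl ⟨e, h1, h2, rfl⟩))

lemma intCast_sq_mem : ((c ^ 2 : ℤ) : Kf n f) ∈ T :=
  Submodule.subset_span (Or.inl (ι_eq_intCast _).symm)

lemma leadingCoeff_mul_root_pow_mem : (f 0 : Kf n f) * θ ^ (n - 1) ∈ T :=
  Submodule.subset_span (Or.inr (Or.inr (by rw [ι_eq_intCast])))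

lemma coeff_mul_root_pow_mem (hc : f n = c ^ 2) {j e : ℕ}
    (h : 1 ≤ e ∧ e ≤ n - 2 ∨ j = 0 ∧ e = n - 1 ∨ j = n ∧ e = 0) :
    (f j : Kf n f) * θ ^ e ∈ T := by
  obtain h | ⟨rfl, rfl⟩ | ⟨rfl, rfl⟩ := h
  · exact intCast_mul_mem _ (root_pow_mem h.1 h.2)
  · exact leadingCoeff_mul_root_pow_mem
  · rw [pow_zero, mul_one, hc]
    exact intCast_sq_mem

lemma root_pow_mul_zeta_mem (hc : f n = c ^ 2) {e l : ℕ} (he : e ≤ n - 2) (hl : l ≤ n) :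
    θ ^ e * zeta n f l ∈ T := by
  rcases lt_or_ge (e + l) n with h | h
  · rw [root_pow_mul_zeta]
    refine sum_mem fun j hj => coeff_mul_root_pow_mem hc ?_
    have := mem_range.1 hj
    omega
  · rw [root_pow_mul_zeta_of_le hl h]
    refine neg_mem (sum_mem fun j hj => coeff_mul_root_pow_mem hc ?_)
    have := mem_Ico.1 hj
    omega

lemma zeta_mem (hc : f n = c ^ 2) {l : ℕ} (hl : l ≤ n) : zeta n f l ∈ T := by
  simpa using root_pow_mul_zeta_mem hc (Nat.zero_le _) hl

lemma leadingCoeff_mul_root_pow_mul_zeta_mem {l : ℕ} (hl2 : 2 ≤ l) (hl : l ≤ n) :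
    (f 0 : Kf n f) * (θ ^ (n - 1) * zeta n f l) ∈ T := by
  rw [root_pow_mul_zeta_of_le hl (by omega), mul_neg, mul_sum]
  refine neg_mem (sum_mem fun j hj => ?_)
  obtain ⟨hlj, hjn⟩ := mem_Ico.1 hj
  rcases hlj.eq_or_lt with rfl | hlj
  · rw [mul_left_comm, Nat.add_sub_cancel]
    exact intCast_mul_mem _ leadingCoeff_mul_root_pow_mem
  · rw [← mul_assoc, ← Int.cast_mul]
    exact intCast_mul_mem _ (root_pow_mem (by omega) (by omega))

lemma zeta_mul_zeta_mem (hc : f n = c ^ 2) {k l : ℕ} (hk : k ≤ n - 1) (hl2 : 2 ≤ l)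
    (hl : l ≤ n) : zeta n f k * zeta n f l ∈ T := by
  rw [zeta_eq_sum, sum_mul]
  refine sum_mem fun j hj => ?_
  rw [mul_assoc]
  by_cases h : k - j ≤ n - 2
  · exact intCast_mul_mem _ (root_pow_mul_zeta_mem hc h hl)
  · obtain rfl : j = 0 := by have := mem_range.1 hj; omega
    rw [show k - 0 = n - 1 by omega]
    exact leadingCoeff_mul_root_pow_mul_zeta_mem hl2 hl

lemma mul_mem_of_mem_Igens (hn : 4 ≤ n) (hc : f n = c ^ 2) {x y : Kf n f}
    (hx : x ∈ Igens n f c) (hy : y ∈ Igens n f c) : x * y ∈ T := by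
  simp only [Igens, Set.mem_ofPred_eq, ι_eq_intCast] at hx hy
  rcases hx with rfl | ⟨i, hi1, hi2, rfl⟩ | ⟨k, hk1, hk2, rfl⟩ <;>
    rcases hy with rfl | ⟨j, hj1, hj2, rfl⟩ | ⟨l, hl1, hl2, rfl⟩
  · rw [← Int.cast_mul, ← sq]
    exact intCast_sq_mem
  · exact intCast_mul_mem _ (root_pow_mem hj1 (by omega))
  · exact intCast_mul_mem _ (zeta_mem hc (by omega))
  · rw [mul_comm]
    exact intCast_mul_mem _ (root_pow_mem hi1 (by omega))
  · rw [← pow_add]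
    exact root_pow_mem (by omega) (by omega)
  · exact root_pow_mul_zeta_mem hc (by omega) (by omega)
  · rw [mul_comm]
    exact intCast_mul_mem _ (zeta_mem hc (by omega))
  · rw [mul_comm]
    exact root_pow_mul_zeta_mem hc (by omega) (by omega)
  · exact zeta_mul_zeta_mem hc hk2 (by omega) (by omega)

end

theorem ideal_square_containment_general (n : ℕ) (hn : 4 ≤ n)
    (f : ℕ → ℤ) (c : ℤ) (hc : f n = c ^ 2) :
    ∀ a ∈ Submodule.span ℤ (Igens n f c), ∀ b ∈ Submodule.span ℤ (Igens n f c),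
      a * b ∈ Submodule.span ℤ (Tgens n f c) := by
  intro a ha b hb
  have hab := Submodule.mul_mem_mul ha hb
  rw [Submodule.span_mul_span] at hab
  refine Submodule.span_le.2 ?_ hab
  rintro _ ⟨x, hx, y, hy, rfl⟩
  exact mul_mem_of_mem_Igens hn hc hx hy

/-- If `fₙ = c²`, then the square of the `ℤ`-module
`I = ⟨c, θ, …, θ^{(n−2)/2}, ζ_{n/2}, …, ζ_{n−1}⟩` is contained in the `ℤ`-module
`⟨c², θ, θ², …, θ^{n−2}, f₀θ^{n−1}⟩ = θ·I_f^{n−3}`. -/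
theorem ideal_square_containment (n : ℕ) (hn : 4 ≤ n) (he : Even n)
    (f : ℕ → ℤ) (hf0 : f 0 ≠ 0) (c : ℤ) (hc : f n = c ^ 2) :
    ∀ a ∈ Submodule.span ℤ (Igens n f c), ∀ b ∈ Submodule.span ℤ (Igens n f c),
      a * b ∈ Submodule.span ℤ (Tgens n f c) :=
  ideal_square_containment_general n hn f c hc
end
end

section
/- Let p be an odd prime and let f₀, f₁, f₂ ∈ ℤ_p be such that f₀ is a unit of ℤ_p that is not a square in ℤ_p, f₁ ∈ pℤ_p, and f₂ ∈ pℤ_p but f₂ ∉ p²ℤ_p. Then there exist no x₀, y₀, z₀ ∈ ℚ_p with (x₀,y₀) ≠ (0,0) and z₀² = f₀x₀² + f₁x₀y₀ + f₂y₀²; i.e., the binary quadratic form f(x,y) = f₀x² + f₁xy + f₂y² does not represent any nonzero square over ℚ_p. -/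
/-!
Divide by whichever of `x`, `y` has the larger norm. If it is `x`, then `(z/x)² = f₀ + f₁ t + f₂ t²`
with `t ∈ ℤ_p`; a square of `ℚ_p` lying in `ℤ_p` is a square there, and this one is `≡ f₀ (mod p)`,
so `f₀` is a square by Hensel's lemma. If it is `y`, then `(z/y)² = f₀ s² + f₁ s + f₂` with `p ∣ s`;
this square is divisible by `p`, hence by `p²`, which forces `p² ∣ f₂`.
-/

namespace PadicInt

variable {p : ℕ} [Fact p.Prime]

theorem isSquare_of_isSquare_coe {a : ℤ_[p]} (h : IsSquare (a : ℚ_[p])) : IsSquare a := by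
  obtain ⟨w, hw⟩ := h
  have hw_le : ‖w‖ ≤ 1 := by
    refine (mul_self_le_mul_self_iff (norm_nonneg w) zero_le_one).2 ?_
    rw [← norm_mul, ← hw, one_mul]
    exact norm_le_one a
  exact ⟨⟨w, hw_le⟩, Subtype.ext hw⟩

theorem norm_two_eq_one (hp2 : p ≠ 2) : ‖(2 : ℤ_[p])‖ = 1 := by
  exact_mod_cast norm_natCast_eq_one_iff.2
    ((Nat.coprime_primes (Fact.out : p.Prime) Nat.prime_two).2 hp2)

theorem isSquare_of_dvd_sq_sub (hp2 : p ≠ 2) {u w : ℤ_[p]} (hu : IsUnit u)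
    (h : (p : ℤ_[p]) ∣ w ^ 2 - u) : IsSquare u := by
  have hw : ‖w‖ = 1 := by
    rw [← isUnit_iff]
    by_contra hw
    have hpw : (p : ℤ_[p]) ∣ w ^ 2 :=
      dvd_pow ((norm_lt_one_iff_dvd w).1 (not_isUnit_iff.1 hw)) two_ne_zero
    have hpu : (p : ℤ_[p]) ∣ u := by simpa using hpw.sub h
    exact not_isUnit_iff.2 ((norm_lt_one_iff_dvd u).2 hpu) hu
  have hnorm : ‖w ^ 2 - u‖ < ‖2 * w‖ ^ 2 := by
    rw [norm_mul, norm_two_eq_one hp2, hw, one_mul, one_pow]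
    exact (norm_lt_one_iff_dvd _).2 h
  obtain ⟨v, hv, -⟩ := hensels_lemma (F := Polynomial.X ^ 2 - Polynomial.C u) (a := w) (by
    simpa [one_add_one_eq_two] using hnorm)
  exact ⟨v, by simpa [sub_eq_zero, sq, eq_comm] using hv⟩

section BinaryForm

variable {f₀ f₁ f₂ : ℤ_[p]}

theorem not_isSquare_add_mul_add_mul_sq (hp2 : p ≠ 2) (hunit : IsUnit f₀) (hns : ¬IsSquare f₀)
    (h1 : (p : ℤ_[p]) ∣ f₁) (h2 : (p : ℤ_[p]) ∣ f₂) (t : ℤ_[p]) :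
    ¬IsSquare (f₀ + f₁ * t + f₂ * t ^ 2) := by
  rintro ⟨w, hw⟩
  have hdiff : w ^ 2 - f₀ = f₁ * t + f₂ * t ^ 2 := by rw [sq w, ← hw]; ring
  exact hns (isSquare_of_dvd_sq_sub hp2 hunit (hdiff ▸ dvd_add (h1.mul_right t) (h2.mul_right _)))

theorem not_isSquare_mul_sq_add_mul_add (h1 : (p : ℤ_[p]) ∣ f₁) (h2 : (p : ℤ_[p]) ∣ f₂)
    (h2' : ¬(p : ℤ_[p]) ^ 2 ∣ f₂) {s : ℤ_[p]} (hs : (p : ℤ_[p]) ∣ s) :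
    ¬IsSquare (f₀ * s ^ 2 + f₁ * s + f₂) := by
  rintro ⟨w, hw⟩
  obtain ⟨s, rfl⟩ := hs
  obtain ⟨g, rfl⟩ := h1
  have hpw : (p : ℤ_[p]) ∣ w := by
    refine prime_p.dvd_of_dvd_pow (n := 2) ?_
    rw [sq, ← hw]
    exact dvd_add (dvd_add ⟨p * f₀ * s ^ 2, by ring⟩ ⟨g * p * s, by ring⟩) h2
  obtain ⟨v, rfl⟩ := hpw
  exact h2' ⟨v ^ 2 - f₀ * s ^ 2 - g * s, by linear_combination hw⟩

end BinaryForm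

end PadicInt

/-- Let `p` be an odd prime and let `f₀, f₁, f₂ ∈ ℤ_p` with `f₀` a non-square unit,
`p ∣ f₁`, and `p ∣ f₂` but `p² ∤ f₂`. Then the binary quadratic form
`f₀x² + f₁xy + f₂y²` represents no nonzero square over `ℚ_p`. -/
theorem quadratic_form_represents_no_square (p : ℕ) [Fact p.Prime] (hp2 : p ≠ 2)
    (f₀ f₁ f₂ : ℤ_[p]) (hunit : IsUnit f₀) (hns : ¬ ∃ v : ℤ_[p], f₀ = v ^ 2)
    (h1 : (p : ℤ_[p]) ∣ f₁) (h2 : (p : ℤ_[p]) ∣ f₂) (h2' : ¬ (p : ℤ_[p]) ^ 2 ∣ f₂) :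
    ¬ ∃ x y z : ℚ_[p], (x, y) ≠ (0, 0) ∧
      z ^ 2 = (f₀ : ℚ_[p]) * x ^ 2 + (f₁ : ℚ_[p]) * x * y + (f₂ : ℚ_[p]) * y ^ 2 := by
  rintro ⟨x, y, z, hxy, hz⟩
  rw [← isSquare_iff_exists_sq] at hns
  rcases le_or_gt ‖y‖ ‖x‖ with hyx | hxy'
  · have hx : x ≠ 0 := by
      rintro rfl
      exact hxy (by simpa using hyx)
    obtain ⟨t, ht⟩ : ∃ t : ℤ_[p], (t : ℚ_[p]) = y / x :=
      ⟨⟨y / x, by rw [norm_div]; exact div_le_one_of_le₀ hyx (norm_nonneg x)⟩, rfl⟩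
    refine PadicInt.not_isSquare_add_mul_add_mul_sq hp2 hunit hns h1 h2 t
      (PadicInt.isSquare_of_isSquare_coe ⟨z / x, ?_⟩)
    push_cast
    rw [ht]
    field_simp
    linear_combination -hz
  · have hy : y ≠ 0 := norm_pos_iff.1 ((norm_nonneg x).trans_lt hxy')
    have hs_lt : ‖x / y‖ < 1 := by rw [norm_div]; exact (div_lt_one (norm_pos_iff.2 hy)).2 hxy'
    obtain ⟨s, hs⟩ : ∃ s : ℤ_[p], (s : ℚ_[p]) = x / y := ⟨⟨x / y, hs_lt.le⟩, rfl⟩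
    have hps : (p : ℤ_[p]) ∣ s :=
      (PadicInt.norm_lt_one_iff_dvd s).1 (by rwa [PadicInt.norm_def, hs])
    refine PadicInt.not_isSquare_mul_sq_add_mul_add (f₀ := f₀) h1 h2 h2' hps
      (PadicInt.isSquare_of_isSquare_coe ⟨z / y, ?_⟩)
    push_cast
    rw [hs]
    field_simp
    linear_combination -hz
end
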